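/- Let n, d be positive integers with d + 1 ≤ n, let X^d be a set of (d+1)-element subsets of {1,…,n}, and suppose the adjacency graph G is connected and every (d−1)-simplex has degree exactly r, where r ≥ 2 and (r−1)·d ≥ 2. If D is the diameter of G and N = C(n,d), then D ≥ log(1 + (N − 1)·((r−1)·d − 1)/(r·d)) / log((r−1)·d). -/

import Mathlib

/-- The adjacency graph of the pair `(X_{d-1}, X^d)`: vertices are the `d`-element
subsets of `Fin n` (the `(d-1)`-simplices), and two distinct vertices are adjacent
iff their union belongs to `Xd`. -/
def simGraph (n d : ℕ) (Xd : Finset (Finset (Fin n))) :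
    SimpleGraph {s : Finset (Fin n) // s.card = d} where
  Adj σ τ := σ ≠ τ ∧ σ.val ∪ τ.val ∈ Xd
  symm := ⟨fun σ τ ⟨h1, h2⟩ => ⟨h1.symm, by rwa [Finset.union_comm]⟩⟩
  loopless := ⟨fun σ ⟨h, _⟩ => h rfl⟩

/-- The degree of a `(d-1)`-simplex: the number of `d`-simplices in `Xd` containing it. -/
def simDegree (n d : ℕ) (Xd : Finset (Finset (Fin n)))
    (σ : {s : Finset (Fin n) // s.card = d}) : ℕ :=
  (Xd.filter (fun t => σ.val ⊆ t)).card

/-!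
This is the Moore bound for the adjacency graph. Fix a base simplex `u` and count the spheres
`{v | dist u v = k}`. The sphere of radius 1 has at most `r d` elements, since each of the `r`
`d`-simplices through `u` contributes its `d` other facets. A simplex `ρ` at distance `k + 1 ≥ 1`
has a neighbour `π` at distance `k`, and all the facets of `ρ ∪ π` are within distance `k + 1`,
so the neighbours of `ρ` at distance `k + 2` come from the remaining `r - 1` simplices through
`ρ`: at most `(r - 1) d` of them. Therefore `N ≤ 1 + r d ∑_{j < D} ((r - 1) d)^j`. Summing the
geometric series and taking logarithms gives the bound.
-/

open Finset

namespace SimpleGraph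

variable {V : Type*} {G : SimpleGraph V}

lemma exists_adj_of_dist_eq_add_one {u v : V} {k : ℕ} (h : G.dist u v = k + 1) :
    ∃ w, G.Adj w v ∧ G.dist u w = k := by
  have hreach : G.Reachable u v := Reachable.of_dist_ne_zero (by omega)
  obtain ⟨p, hp⟩ := hreach.exists_walk_length_eq_dist
  have hnil : ¬p.Nil := by rw [← Walk.length_eq_zero_iff]; omega
  have hadj := Walk.adj_penultimate hnil
  have hle : G.dist u p.penultimate ≤ k := by
    simpa [Walk.length_dropLast, hp, h] using G.dist_le p.dropLast
  refine ⟨_, hadj, ?_⟩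
  have := hadj.diff_dist_adj (u := u)
  omega

variable [Fintype V] [DecidableRel G.Adj]

lemma card_dist_eq_one (u : V) : #{v | G.dist u v = 1} = G.degree u := by
  rw [← card_neighborFinset_eq_degree, neighborFinset_eq_filter]
  simp only [dist_eq_one_iff_adj]

variable [DecidableEq V]

lemma card_dist_eq_add_two_le {u : V} {b : ℕ}
    (hfwd : ∀ v w, G.Adj v w → #(G.neighborFinset v \ insert w (G.neighborFinset w)) ≤ b)
    (k : ℕ) : #{v | G.dist u v = k + 2} ≤ #{v | G.dist u v = k + 1} * b := by
  have hcover : ({v | G.dist u v = k + 2} : Finset V) ⊆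
      ({v | G.dist u v = k + 1} : Finset V).biUnion
        fun ρ ↦ {x ∈ G.neighborFinset ρ | G.dist u x = k + 2} := by
    intro v hv
    obtain ⟨ρ, hρv, hρ⟩ := exists_adj_of_dist_eq_add_one (mem_filter.mp hv).2
    exact mem_biUnion.mpr ⟨ρ, by simpa using hρ, by simpa [hρv] using hv⟩
  refine (card_le_card hcover).trans (card_biUnion_le_card_mul _ _ _ fun ρ hρ ↦ ?_)
  obtain ⟨π, hπρ, hπ⟩ := exists_adj_of_dist_eq_add_one (mem_filter.mp hρ).2
  refine (card_le_card fun x hx ↦ ?_).trans (hfwd ρ π hπρ.symm)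
  simp only [mem_filter, mem_neighborFinset] at hx
  simp only [mem_sdiff, mem_insert, mem_neighborFinset, hx.1, true_and]
  rintro (rfl | hπx)
  · omega
  · have := hπx.diff_dist_adj (u := u)
    omega

lemma card_dist_eq_add_one_le {u : V} {a b : ℕ} (hdeg : G.degree u ≤ a)
    (hfwd : ∀ v w, G.Adj v w → #(G.neighborFinset v \ insert w (G.neighborFinset w)) ≤ b) :
    ∀ k, #{v | G.dist u v = k + 1} ≤ a * b ^ k
  | 0 => by rw [card_dist_eq_one, pow_zero, mul_one]; exact hdeg
  | k + 1 => calc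
      _ ≤ #{v | G.dist u v = k + 1} * b := card_dist_eq_add_two_le hfwd k
      _ ≤ a * b ^ k * b := Nat.mul_le_mul_right _ (card_dist_eq_add_one_le hdeg hfwd k)
      _ = a * b ^ (k + 1) := by ring

theorem Connected.card_le_one_add_mul_geom_sum (hconn : G.Connected) {a b : ℕ}
    (hdeg : ∀ v, G.degree v ≤ a)
    (hfwd : ∀ v w, G.Adj v w → #(G.neighborFinset v \ insert w (G.neighborFinset w)) ≤ b) :
    Fintype.card V ≤ 1 + a * ∑ j ∈ range G.diam, b ^ j := by
  have := hconn.nonempty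
  let u := Classical.arbitrary V
  have hdiam : G.ediam ≠ ⊤ := connected_iff_ediam_ne_top.mp hconn
  have hsphere0 : #{v | G.dist u v = 0} = 1 := by
    simp [hconn.dist_eq_zero_iff, filter_eq]
  rw [← card_univ, card_eq_sum_card_fiberwise (t := range (G.diam + 1))
    fun v _ ↦ mem_range_succ_iff.mpr (G.dist_le_diam hdiam), sum_range_succ', hsphere0,
    add_comm 1, mul_sum]
  exact Nat.add_le_add_right (sum_le_sum fun k _ ↦ card_dist_eq_add_one_le (hdeg u) hfwd k) 1

end SimpleGraph

lemma Finset.union_eq_of_card_eq_add_one {α : Type*} [DecidableEq α] {s t u : Finset α}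
    (hs : s ⊆ u) (ht : t ⊆ u) (hst : s ≠ t) (hcard : #s = #t) (hu : #u = #s + 1) :
    s ∪ t = u := by
  refine eq_of_subset_of_card_le (union_subset hs ht) ?_
  have hssub : s ⊂ s ∪ t := ssubset_of_subset_of_ne subset_union_left fun h ↦
    hst (eq_of_subset_of_card_le (subset_union_right.trans h.ge) hcard.le).symm
  have := card_lt_card hssub
  omega

lemma log_one_add_div_le_of_le_one_add_mul_geom_sum {N a b : ℝ} {D : ℕ} (hN : 1 ≤ N)
    (ha : 0 < a) (hb : 1 < b) (h : N ≤ 1 + a * ∑ j ∈ range D, b ^ j) :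
    Real.log (1 + (N - 1) * (b - 1) / a) / Real.log b ≤ D := by
  have hbD : 1 + (N - 1) * (b - 1) / a ≤ b ^ D := by
    have hgeom := mul_geom_sum b D
    rw [← le_sub_iff_add_le', div_le_iff₀ ha]
    nlinarith
  rw [div_le_iff₀ (Real.log_pos hb), ← Real.log_pow]
  exact Real.log_le_log (by positivity) hbD

section simGraph

variable {n d r : ℕ} {Xd : Finset (Finset (Fin n))}

instance : DecidableRel (simGraph n d Xd).Adj := fun σ τ ↦
  inferInstanceAs (Decidable (σ ≠ τ ∧ σ.val ∪ τ.val ∈ Xd))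

lemma card_le_card_mul_of_union_mem (ρ : {s : Finset (Fin n) // s.card = d})
    {T : Finset {s : Finset (Fin n) // s.card = d}} {S : Finset (Finset (Fin n))}
    (hS : ∀ t ∈ S, #t = d + 1) (hT : ∀ σ ∈ T, ρ.val ∪ σ.val ∈ S) :
    #T ≤ #S * d := by
  calc #T ≤ #(S ×ˢ ρ.val.powersetCard 1) := by
        refine card_le_card_of_injOn (fun σ ↦ (ρ.val ∪ σ.val, ρ.val \ σ.val))
          (fun σ hσ ↦ ?_) fun σ _ τ _ h ↦ Subtype.ext ?_
        · have hcard : #(ρ.val \ σ.val) = 1 := by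
            rw [← union_sdiff_right, card_sdiff_of_subset subset_union_right,
              hS _ (hT σ hσ), σ.prop, Nat.add_sub_cancel_left]
          simp [mem_powersetCard, hT σ hσ, hcard]
        · have hrecover (τ : Finset (Fin n)) : (ρ.val ∪ τ) \ (ρ.val \ τ) = τ := by grind
          rw [← hrecover σ.val, ← hrecover τ.val]
          simp only [Prod.mk.injEq] at h
          rw [h.1, h.2]
    _ = #S * d := by rw [card_product, card_powersetCard, ρ.prop, Nat.choose_one_right]

lemma simGraph_degree_le (hXd : ∀ s ∈ Xd, s.card = d + 1)
    (hreg : ∀ σ, simDegree n d Xd σ = r) (ρ : {s : Finset (Fin n) // s.card = d}) :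
    (simGraph n d Xd).degree ρ ≤ r * d := by
  rw [← hreg ρ, ← SimpleGraph.card_neighborFinset_eq_degree]
  refine card_le_card_mul_of_union_mem ρ (fun t ht ↦ hXd t (mem_filter.mp ht).1) fun σ hσ ↦
    mem_filter.mpr ⟨?_, subset_union_left⟩
  exact ((simGraph n d Xd).mem_neighborFinset ρ σ).mp hσ |>.2

lemma simGraph_card_neighborFinset_sdiff_le (hXd : ∀ s ∈ Xd, s.card = d + 1)
    (hreg : ∀ σ, simDegree n d Xd σ = r) {ρ π : {s : Finset (Fin n) // s.card = d}}
    (hρπ : (simGraph n d Xd).Adj ρ π) :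
    #((simGraph n d Xd).neighborFinset ρ \ insert π ((simGraph n d Xd).neighborFinset π)) ≤
      (r - 1) * d := by
  have hmem : ρ.val ∪ π.val ∈ {t ∈ Xd | ρ.val ⊆ t} :=
    mem_filter.mpr ⟨hρπ.2, subset_union_left⟩
  have hcard : #({t ∈ Xd | ρ.val ⊆ t}.erase (ρ.val ∪ π.val)) = r - 1 := by
    rw [card_erase_of_mem hmem]
    exact congrArg (· - 1) (hreg ρ)
  rw [← hcard]
  refine card_le_card_mul_of_union_mem ρ
    (fun t ht ↦ hXd t (mem_filter.mp (mem_of_mem_erase ht)).1) fun σ hσ ↦ ?_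
  simp only [mem_sdiff, mem_insert, SimpleGraph.mem_neighborFinset, not_or] at hσ
  obtain ⟨hρσ, hσπ, hπσ⟩ := hσ
  refine mem_erase.mpr
    ⟨fun h ↦ hπσ ⟨Ne.symm hσπ, ?_⟩, mem_filter.mpr ⟨hρσ.2, subset_union_left⟩⟩
  -- two distinct facets of the same `d`-simplex span it, so `π` and `σ` would be adjacent
  rw [union_comm, union_eq_of_card_eq_add_one (h ▸ subset_union_right) subset_union_right
    (Subtype.val_injective.ne hσπ) (σ.prop.trans π.prop.symm) (by rw [hXd _ hρπ.2, σ.prop])]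
  exact hρπ.2

end simGraph

theorem stmt3_general (n d r : ℕ)
    (hrd : 2 ≤ (r - 1) * d)
    (Xd : Finset (Finset (Fin n))) (hXd : ∀ s ∈ Xd, s.card = d + 1)
    (hconn : (simGraph n d Xd).Connected)
    (hreg : ∀ σ, simDegree n d Xd σ = r)
    (D : ℕ) (hD : D = (simGraph n d Xd).diam)
    (N : ℝ) (hN : N = (n.choose d : ℝ)) :
    (D : ℝ) ≥
      Real.log (1 + (N - 1) * (((r : ℝ) - 1) * d - 1) / ((r : ℝ) * d)) /
        Real.log (((r : ℝ) - 1) * d) := by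
  have hr : 1 ≤ r := Nat.one_le_iff_ne_zero.mpr (by rintro rfl; simp at hrd)
  have hd : 0 < d := Nat.pos_of_ne_zero (by rintro rfl; simp at hrd)
  have hmoore := hconn.card_le_one_add_mul_geom_sum (simGraph_degree_le hXd hreg)
    fun _ _ ↦ simGraph_card_neighborFinset_sdiff_le hXd hreg
  rw [← hD, Fintype.card_finset_len, Fintype.card_fin] at hmoore
  have hN1 : 1 ≤ N := by
    have := hconn.nonempty
    rw [hN, Nat.one_le_cast, ← Fintype.card_fin n, ← Fintype.card_finset_len]
    exact Fintype.card_pos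
  have hb : (((r - 1) * d : ℕ) : ℝ) = ((r : ℝ) - 1) * d := by push_cast [hr]; rfl
  rw [ge_iff_le, ← hb]
  refine log_one_add_div_le_of_le_one_add_mul_geom_sum hN1 (by positivity)
    (by exact_mod_cast hrd) ?_
  rw [hN]
  exact_mod_cast hmoore

theorem stmt3 (n d r : ℕ) (hd : 0 < d) (hn : d + 1 ≤ n) (hr : 2 ≤ r)
    (hrd : 2 ≤ (r - 1) * d)
    (Xd : Finset (Finset (Fin n))) (hXd : ∀ s ∈ Xd, s.card = d + 1)
    (hconn : (simGraph n d Xd).Connected)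
    (hreg : ∀ σ, simDegree n d Xd σ = r)
    (D : ℕ) (hD : D = (simGraph n d Xd).diam)
    (N : ℝ) (hN : N = (n.choose d : ℝ)) :
    (D : ℝ) ≥
      Real.log (1 + (N - 1) * (((r : ℝ) - 1) * d - 1) / ((r : ℝ) * d)) /
        Real.log (((r : ℝ) - 1) * d) :=
  stmt3_general n d r hrd Xd hXd hconn hreg D hD N hN
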